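/- For every nonzero solution x of the generalized Fermat system of type (k,n), the (n-1) × (n+1) Jacobian matrix whose (i,j) entry is the partial derivative ∂P_i/∂x_j evaluated at x has rank n-1. (That is, the generalized Fermat curve C^k(λ) ⊂ ℙ^n(ℂ) is a smooth complete intersection curve.) -/

import Mathlib

/-!
Index the equations from `0` and write `a = (1, λ₁, …, λ_{n-2})`, so that
`P_i = a_i x₀^k + x₁^k + x_{i+2}^k` and the row of `P_i` in the Jacobian is
`k (a_i x₀^{k-1} e₀ + x₁^{k-1} e₁ + x_{i+2}^{k-1} e_{i+2})`. Given a relation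
`∑ g_i row_i = 0`, column `i+2` forces `x_{i+2} = 0` whenever `g_i ≠ 0`, and there the equations
read `a_i x₀^k + x₁^k = 0`. If `x₀ ≠ 0`, the distinct values `a_i` leave a single index `i` in the
support of `g`, and column `0` gives `g_i a_i x₀^{k-1} = 0`, which is absurd. So `x₀ = 0`, hence
`x₁ = 0` and then every `x_j = 0`.
-/

noncomputable section

/-- The polynomials `P₁, …, P_{n-1}` of the generalized Fermat system of type `(k,n)`:
`P₁ = x₀^k + x₁^k + x₂^k` and `P_{j+1} = λ_j·x₀^k + x₁^k + x_{j+2}^k` for `j = 1, …, n-2`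
(0-indexed below). -/
def gfPoly (k n : ℕ) (hn : 3 ≤ n) (lam : Fin (n - 2) → ℂ) :
    Fin (n - 1) → MvPolynomial (Fin (n + 1)) ℂ := fun i =>
  if (i : ℕ) = 0 then
    MvPolynomial.X ⟨0, by omega⟩ ^ k + MvPolynomial.X ⟨1, by omega⟩ ^ k +
      MvPolynomial.X ⟨2, by omega⟩ ^ k
  else
    MvPolynomial.C (lam ⟨(i : ℕ) - 1, by have := i.2; omega⟩) *
        MvPolynomial.X ⟨0, by omega⟩ ^ k +
      MvPolynomial.X ⟨1, by omega⟩ ^ k +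
      MvPolynomial.X ⟨(i : ℕ) + 2, by have := i.2; omega⟩ ^ k

open MvPolynomial

theorem fermat_eq_zero_of_nontrivial_relation {K ι : Type*} [Field K] [Fintype ι] {k : ℕ}
    (hk : k ≠ 0) {a : ι → K} (ha : Function.Injective a) (ha0 : ∀ i, a i ≠ 0) {u v : K} {w : ι → K}
    (h : ∀ i, a i * u ^ k + v ^ k + w i ^ k = 0) {g : ι → K} (hg : g ≠ 0)
    (hw : ∀ i, g i ≠ 0 → w i = 0) (hu : u ≠ 0 → ∑ i, g i * a i = 0) :
    u = 0 ∧ v = 0 ∧ w = 0 := by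
  obtain ⟨i, hi⟩ := Function.ne_iff.mp hg
  have hsupp : ∀ j, g j ≠ 0 → a j * u ^ k + v ^ k = 0 := fun j hj => by
    simpa [hw j hj, hk] using h j
  have hu0 : u = 0 := by
    by_contra hu0
    have hsingle : ∀ j, g j ≠ 0 → j = i := fun j hj =>
      ha <| mul_right_cancel₀ (pow_ne_zero k hu0) <| by
        linear_combination hsupp j hj - hsupp i hi
    have hsum : ∑ j, g j * a j = g i * a i :=
      Finset.sum_eq_single i (fun j _ hji => by
        rw [not_imp_comm.mp (hsingle j) hji, zero_mul]) (by simp)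
    exact mul_ne_zero hi (ha0 i) (hsum ▸ hu hu0)
  have hv0 : v = 0 := (pow_eq_zero_iff hk).mp (by simpa [hu0, hk] using hsupp i hi)
  exact ⟨hu0, hv0, funext fun j => (pow_eq_zero_iff hk).mp (by simpa [hu0, hv0, hk] using h j)⟩

section GeneralizedFermat

variable {n : ℕ}

def gfCoeff (lam : Fin (n - 2) → ℂ) (i : Fin (n - 1)) : ℂ :=
  if h : (i : ℕ) = 0 then 1 else lam ⟨i - 1, by have := i.2; omega⟩

def gfCol (i : Fin (n - 1)) : Fin (n + 1) := ⟨i + 2, by have := i.2; omega⟩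

theorem gfCoeff_ne_zero {lam : Fin (n - 2) → ℂ} (hl0 : ∀ j, lam j ≠ 0) (i : Fin (n - 1)) :
    gfCoeff lam i ≠ 0 := by
  unfold gfCoeff
  split_ifs
  exacts [one_ne_zero, hl0 _]

theorem gfCoeff_injective {lam : Fin (n - 2) → ℂ} (hl1 : ∀ j, lam j ≠ 1)
    (hinj : Function.Injective lam) : Function.Injective (gfCoeff lam) := by
  intro i i' h
  unfold gfCoeff at h
  split_ifs at h with hi hi'
  · exact Fin.ext (hi.trans hi'.symm)
  · exact absurd h.symm (hl1 _)
  · exact absurd h (hl1 _)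
  · have := Fin.val_eq_of_eq (hinj h)
    exact Fin.ext (by simp only at this; omega)

theorem eq_zero_of_gfCol (hn : 3 ≤ n) {x : Fin (n + 1) → ℂ} (h0 : x ⟨0, by omega⟩ = 0)
    (h1 : x ⟨1, by omega⟩ = 0) (hcol : ∀ i, x (gfCol i) = 0) : x = 0 := by
  funext ⟨j, hj⟩
  match j with
  | 0 => exact h0
  | 1 => exact h1
  | j + 2 => exact hcol ⟨j, by omega⟩

theorem gfPoly_eq (k : ℕ) (hn : 3 ≤ n) (lam : Fin (n - 2) → ℂ) (i : Fin (n - 1)) :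
    gfPoly k n hn lam i =
      C (gfCoeff lam i) * X ⟨0, by omega⟩ ^ k + X ⟨1, by omega⟩ ^ k + X (gfCol i) ^ k := by
  unfold gfPoly gfCoeff
  split_ifs <;> simp [gfCol, *]

theorem eval_pderiv_zero_gfPoly (k : ℕ) (hn : 3 ≤ n) (lam : Fin (n - 2) → ℂ)
    (x : Fin (n + 1) → ℂ) (i : Fin (n - 1)) :
    eval x (pderiv ⟨0, by omega⟩ (gfPoly k n hn lam i)) =
      gfCoeff lam i * (k * x ⟨0, by omega⟩ ^ (k - 1)) := by
  simp [gfPoly_eq, pderiv_X, gfCol, Fin.ext_iff]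

theorem eval_pderiv_gfCol_gfPoly (k : ℕ) (hn : 3 ≤ n) (lam : Fin (n - 2) → ℂ)
    (x : Fin (n + 1) → ℂ) (i t : Fin (n - 1)) :
    eval x (pderiv (gfCol t) (gfPoly k n hn lam i)) =
      Pi.single (M := fun _ => ℂ) t (k * x (gfCol t) ^ (k - 1)) i := by
  rcases eq_or_ne i t with rfl | hit
  · simp [gfPoly_eq, pderiv_X, gfCol, Fin.ext_iff]
  · simp [gfPoly_eq, pderiv_X, gfCol, Fin.ext_iff, hit, Fin.val_ne_of_ne hit]

def gfJacobian (k n : ℕ) (hn : 3 ≤ n) (lam : Fin (n - 2) → ℂ) (x : Fin (n + 1) → ℂ) :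
    Matrix (Fin (n - 1)) (Fin (n + 1)) ℂ :=
  Matrix.of fun i j => eval x (pderiv j (gfPoly k n hn lam i))

theorem linearIndependent_gfJacobian {k : ℕ} (hk : 2 ≤ k) (hn : 3 ≤ n)
    {lam : Fin (n - 2) → ℂ} (hl0 : ∀ j, lam j ≠ 0) (hl1 : ∀ j, lam j ≠ 1)
    (hinj : Function.Injective lam) {x : Fin (n + 1) → ℂ} (hx0 : x ≠ 0)
    (hx : ∀ i, eval x (gfPoly k n hn lam i) = 0) :
    LinearIndependent ℂ (gfJacobian k n hn lam x) := by
  refine Fintype.linearIndependent_iff.mpr fun g hg => ?_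
  have hcol (j : Fin (n + 1)) : ∑ i, g i * eval x (pderiv j (gfPoly k n hn lam i)) = 0 := by
    simpa [gfJacobian] using congrFun hg j
  have hk0 : k ≠ 0 := by omega
  have hk1 : k - 1 ≠ 0 := by omega
  by_contra! hg0
  have hw (t : Fin (n - 1)) (ht : g t ≠ 0) : x (gfCol t) = 0 := by
    simpa [eval_pderiv_gfCol_gfPoly, Pi.single_apply, ht, hk0, hk1] using hcol (gfCol t)
  have hu (hu : x ⟨0, by omega⟩ ≠ 0) : ∑ i, g i * gfCoeff lam i = 0 := by
    have := hcol ⟨0, by omega⟩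
    simp only [eval_pderiv_zero_gfPoly, ← mul_assoc, ← Finset.sum_mul] at this
    simpa [hk0, hk1, show x 0 ≠ 0 from hu] using this
  obtain ⟨h0, h1, hcols⟩ := fermat_eq_zero_of_nontrivial_relation hk0
    (gfCoeff_injective hl1 hinj) (gfCoeff_ne_zero hl0) (w := x ∘ gfCol)
    (fun i => by simpa [gfPoly_eq] using hx i) (Function.ne_iff.mpr hg0) hw hu
  exact hx0 (eq_zero_of_gfCol hn h0 h1 (congrFun hcols))

end GeneralizedFermat

theorem generalized_fermat_jacobian_rank (k n : ℕ) (hk : 2 ≤ k) (hn : 3 ≤ n)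
    (lam : Fin (n - 2) → ℂ) (hl0 : ∀ j, lam j ≠ 0) (hl1 : ∀ j, lam j ≠ 1)
    (hinj : Function.Injective lam)
    (x : Fin (n + 1) → ℂ) (hx0 : x ≠ 0)
    (hx : ∀ i, MvPolynomial.eval x (gfPoly k n hn lam i) = 0) :
    (Matrix.of fun (i : Fin (n - 1)) (j : Fin (n + 1)) =>
        MvPolynomial.eval x (MvPolynomial.pderiv j (gfPoly k n hn lam i))).rank = n - 1 := by
  simpa using (linearIndependent_gfJacobian hk hn hl0 hl1 hinj hx0 hx).rank_matrix
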